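/- arXiv:1810.03409 — 8 statements merged into one kernel-verified Lean document; each statement's English description precedes it below -/
import Mathlib

section
/- For 1 ≤ k ≤ n, the number of permutations π of {1,...,n} such that {k} is a dominating set of the permutation graph G_π is exactly (n-k)!·(k-1)!. -/
/-- The permutation graph of `π`: vertices `0,…,n-1` (0-indexed version of `1,…,n`),
with `i < j` adjacent iff `π⁻¹ i > π⁻¹ j`. -/
def permGraph {n : ℕ} (π : Equiv.Perm (Fin n)) : SimpleGraph (Fin n) where
  Adj i j := (i < j ∧ π.symm j < π.symm i) ∨ (j < i ∧ π.symm i < π.symm j)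
  symm := ⟨by intro i j h; tauto⟩
  loopless := ⟨by intro i h; rcases h with ⟨h, _⟩ | ⟨h, _⟩ <;> exact lt_irrefl i h⟩

/-- `D` dominates `G`: every vertex is in `D` or adjacent to an element of `D`. -/
def Dominates {V : Type*} (G : SimpleGraph V) (D : Set V) : Prop :=
  ∀ v, v ∈ D ∨ ∃ d ∈ D, G.Adj v d

/-- The domination number: minimum cardinality of a dominating set. -/
noncomputable def domNumber {V : Type*} [Fintype V] (G : SimpleGraph V) : ℕ :=
  sInf {k | ∃ D : Finset V, D.card = k ∧ Dominates G ↑D}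

/-- Closed neighborhood `N[x]`. -/
def closedNbhd {V : Type*} (G : SimpleGraph V) (x : V) : Set V :=
  {y | y = x ∨ G.Adj x y}

/-- Degree of a vertex. -/
noncomputable def deg {V : Type*} (G : SimpleGraph V) (v : V) : ℕ :=
  (G.neighborSet v).ncard

/-! Put `ρ = rev ∘ π⁻¹`. Then `{k}` dominates `G_π` iff `compare (ρ v) (ρ k) = compare v k`
for all `v`. Such a `ρ` maps `Iio k` onto `Iio (ρ k)`, so comparing cardinalities gives
`ρ k = k`; hence these `ρ` are exactly the permutations preserving the fibres of
`v ↦ compare v k`, of sizes `k`, `1` and `n - 1 - k`. -/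

open Equiv

theorem Ordering.prod_univ {M : Type*} [CommMonoid M] (f : Ordering → M) :
    ∏ i, f i = f .lt * f .eq * f .gt := by
  simp [Finset.univ, Fintype.elems, Finset.prod, mul_assoc]

theorem Fin.compare_rev_rev {n : ℕ} (a b : Fin n) : compare a.rev b.rev = compare b a := by
  rcases lt_trichotomy a b with h | rfl | h
  · rw [compare_gt_iff_gt.mpr (Fin.rev_lt_rev.mpr h), compare_gt_iff_gt.mpr h]
  · simp
  · rw [compare_lt_iff_lt.mpr (Fin.rev_lt_rev.mpr h), compare_lt_iff_lt.mpr h]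

theorem dominates_singleton_permGraph_iff {n : ℕ} (π : Perm (Fin n)) (k : Fin n) :
    Dominates (permGraph π) {k} ↔ ∀ v, compare (π.symm k) (π.symm v) = compare v k := by
  refine forall_congr' fun v => ?_
  simp only [Set.mem_singleton_iff, exists_eq_left, permGraph]
  rcases lt_trichotomy v k with h | rfl | h
  · simp [h, h.ne, not_lt_of_gt h, compare_lt_iff_lt.mpr h, compare_lt_iff_lt]
  · simp
  · simp [h, h.ne', not_lt_of_gt h, compare_gt_iff_gt.mpr h, compare_gt_iff_gt]

theorem Fin.apply_eq_self_of_forall_compare {n : ℕ} {ρ : Perm (Fin n)} {k : Fin n}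
    (h : ∀ v, compare (ρ v) (ρ k) = compare v k) : ρ k = k := by
  have hmap : (Finset.Iio k).map ρ.toEmbedding = Finset.Iio (ρ k) := by
    ext w
    obtain ⟨v, rfl⟩ := ρ.surjective w
    simp [← compare_lt_iff_lt, h]
  have := congrArg Finset.card hmap
  rw [Finset.card_map, Fin.card_Iio, Fin.card_Iio] at this
  exact Fin.ext this.symm

theorem Fin.forall_compare_apply_iff_comp_eq {n : ℕ} (ρ : Perm (Fin n)) (k : Fin n) :
    (∀ v, compare (ρ v) (ρ k) = compare v k) ↔ (compare · k) ∘ ρ = (compare · k) := by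
  constructor
  · intro h
    funext v
    simpa [Fin.apply_eq_self_of_forall_compare h] using h v
  · intro h v
    have hk : ρ k = k := by simpa using congrFun h k
    simpa [hk] using congrFun h v

theorem Fin.card_compare_eq_lt {n : ℕ} (k : Fin n) :
    Fintype.card {v // compare v k = .lt} = k := by
  simp [Fintype.card_subtype, compare_lt_iff_lt, Finset.filter_gt_eq_Iio]

theorem Fin.card_compare_eq_gt {n : ℕ} (k : Fin n) :
    Fintype.card {v // compare v k = .gt} = n - 1 - k := by
  simp [Fintype.card_subtype, compare_gt_iff_gt, Finset.filter_lt_eq_Ioi]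

theorem count_singleton_dominating {n : ℕ} (k : Fin n) :
    Nat.card {π : Equiv.Perm (Fin n) // Dominates (permGraph π) {k}} =
      (n - 1 - (k : ℕ)).factorial * (k : ℕ).factorial := by
  let f : Fin n → Ordering := (compare · k)
  have e : {π : Perm (Fin n) // Dominates (permGraph π) {k}} ≃
      {ρ : Perm (Fin n) // f ∘ ρ = f} :=
    subtypeEquiv ((Equiv.inv _).trans (Equiv.mulLeft Fin.revPerm)) fun π => by
      rw [dominates_singleton_permGraph_iff, ← Fin.forall_compare_apply_iff_comp_eq]
      simp [Fin.compare_rev_rev]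
  rw [Nat.card_congr e, Nat.card_eq_fintype_card, DomMulAct.stabilizer_card, Ordering.prod_univ]
  simp only [f, Fin.card_compare_eq_lt, Fin.card_compare_eq_gt, compare_eq_iff_eq,
    Fintype.card_unique]
  ring
end

section
/- Let f(n,1,t) be the number of permutations of {1,...,n} whose permutation graph has exactly t singleton dominating sets. Then for 1 ≤ t ≤ n, f(n,1,t) = Σ_{k=1}^{n−t+1} f(n−k,1,t−1)·f(k−1,1,0), where f(0,1,0)=1. -/
/-- `f(n,1,t)`: number of permutations of `{1,…,n}` whose permutation graph has
exactly `t` singleton dominating sets. -/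
noncomputable def fDom (n t : ℕ) : ℕ :=
  Nat.card {π : Equiv.Perm (Fin n) // {k | Dominates (permGraph π) {k}}.ncard = t}

/-!
A vertex `v` of `G_π` is adjacent to all others iff every larger value precedes it in `π` and
every smaller value follows it. For `ρ = π⁻¹ ∘ rev` this says that `w = rev v` is a cut point of
`ρ`: `a < w ↔ ρ a < ρ w` for all `a`. Counting then forces `ρ w = w`, so `ρ` is the direct sum
`σ₁ ⊕ 1 ⊕ σ₂` of permutations of the values below and above `w`, and the cut points of `ρ`
other than `w` are exactly those of `σ₁` and `σ₂`. Splitting a permutation with `t ≥ 1` cut points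
at its least cut point `k` is therefore a bijection onto the pairs `(σ₁, σ₂) ∈ S_k × S_{n-1-k}`
where `σ₁` has no cut point and `σ₂` has `t - 1`.
-/

theorem Nat.card_subtype_exists_eq_sum {ι β : Type*} [Fintype ι] [Finite β] {q : ι → β → Prop}
    (huniq : ∀ b i j, q i b → q j b → i = j) :
    Nat.card {b // ∃ i, q i b} = ∑ i, Nat.card {b // q i b} := by
  classical
  have : Fintype β := Fintype.ofFinite β
  simp only [Nat.card_eq_fintype_card, Fintype.card_subtype]
  rw [← Finset.card_biUnion]
  · congr 1
    ext b
    simp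
  · intro i _ j _ hij
    simp only [Function.onFun, Finset.disjoint_left, Finset.mem_filter, Finset.mem_univ, true_and]
    exact fun b hi hj => hij (huniq b i j hi hj)

namespace Equiv.Perm

variable {α β : Type*} [LinearOrder α] [LinearOrder β] {σ : Perm α} {w : α}

def IsCutPoint (σ : Perm α) (w : α) : Prop :=
  ∀ a, a < w ↔ σ a < σ w

def cutPoints (σ : Perm α) : Set α :=
  {w | σ.IsCutPoint w}

variable (α) in
noncomputable def countByCutPoints (t : ℕ) : ℕ :=
  Nat.card {σ : Perm α // σ.cutPoints.ncard = t}

namespace IsCutPoint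

theorem lt_iff_lt_apply (h : σ.IsCutPoint w) (a : α) : w < a ↔ σ w < σ a := by
  rw [← not_le, le_iff_lt_or_eq, h a, ← σ.injective.eq_iff, ← le_iff_lt_or_eq, not_le]

variable [Finite α]

theorem apply_eq (h : σ.IsCutPoint w) : σ w = w := by
  have hIio : Set.Iio (σ w) = σ '' Set.Iio w := by
    ext b
    rw [σ.image_eq_preimage_symm, Set.mem_preimage, Set.mem_Iio, Set.mem_Iio, h, apply_symm_apply]
  have hcard : (Set.Iio (σ w)).ncard = (Set.Iio w).ncard := by
    rw [hIio, Set.ncard_image_of_injective _ σ.injective]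
  rcases lt_trichotomy (σ w) w with hlt | heq | hgt
  · exact absurd hcard (Set.ncard_lt_ncard (Set.Iio_ssubset_Iio hlt)).ne
  · exact heq
  · exact absurd hcard (Set.ncard_lt_ncard (Set.Iio_ssubset_Iio hgt)).ne'

theorem apply_lt_iff (h : σ.IsCutPoint w) (a : α) : σ a < w ↔ a < w := by
  rw [h a, h.apply_eq]

theorem lt_apply_iff (h : σ.IsCutPoint w) (a : α) : w < σ a ↔ w < a := by
  rw [h.lt_iff_lt_apply a, h.apply_eq]

def restrictIio (h : σ.IsCutPoint w) : Perm (Set.Iio w) :=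
  σ.subtypePerm h.apply_lt_iff

def restrictIoi (h : σ.IsCutPoint w) : Perm (Set.Ioi w) :=
  σ.subtypePerm h.lt_apply_iff

@[simp]
theorem coe_restrictIio_apply (h : σ.IsCutPoint w) (a : Set.Iio w) :
    (h.restrictIio a : α) = σ a := rfl

@[simp]
theorem coe_restrictIoi_apply (h : σ.IsCutPoint w) (a : Set.Ioi w) :
    (h.restrictIoi a : α) = σ a := rfl

theorem cutPoints_restrictIio (h : σ.IsCutPoint w) :
    h.restrictIio.cutPoints = {b : Set.Iio w | ↑b ∈ σ.cutPoints} := by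
  refine Set.ext fun ⟨b, hbw⟩ => ?_
  change (∀ a : Set.Iio w, a < ⟨b, hbw⟩ ↔ h.restrictIio a < h.restrictIio ⟨b, hbw⟩) ↔
    ∀ a, a < b ↔ σ a < σ b
  simp only [Subtype.forall, ← Subtype.coe_lt_coe, coe_restrictIio_apply]
  refine ⟨fun hb a => ?_, fun hb a _ => hb a⟩
  rcases lt_or_ge a w with ha | ha
  · exact hb a ha
  · have hσb : σ b < w := (h.apply_lt_iff b).2 hbw
    have hσa : w ≤ σ a := not_lt.1 fun h' => not_lt.2 ha ((h.apply_lt_iff a).1 h')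
    exact iff_of_false (fun hab => not_lt.2 ha (hab.trans hbw))
      (fun hab => not_lt.2 hσa (hab.trans hσb))

theorem cutPoints_restrictIoi (h : σ.IsCutPoint w) :
    h.restrictIoi.cutPoints = {b : Set.Ioi w | ↑b ∈ σ.cutPoints} := by
  refine Set.ext fun ⟨b, hbw⟩ => ?_
  change (∀ a : Set.Ioi w, a < ⟨b, hbw⟩ ↔ h.restrictIoi a < h.restrictIoi ⟨b, hbw⟩) ↔
    ∀ a, a < b ↔ σ a < σ b
  simp only [Subtype.forall, ← Subtype.coe_lt_coe, coe_restrictIoi_apply]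
  refine ⟨fun hb a => ?_, fun hb a _ => hb a⟩
  rcases lt_or_ge w a with ha | ha
  · exact hb a ha
  · have hσb : w < σ b := (h.lt_apply_iff b).2 hbw
    have hσa : σ a ≤ w := not_lt.1 fun h' => not_lt.2 ha ((h.lt_apply_iff a).1 h')
    exact iff_of_true (ha.trans_lt hbw) (hσa.trans_lt hσb)

end IsCutPoint

def glueAt (w : α) (σ₁ : Perm (Set.Iio w)) (σ₂ : Perm (Set.Ioi w)) : Perm α :=
  ofSubtype σ₁ * ofSubtype σ₂

section glueAt

variable (σ₁ : Perm (Set.Iio w)) (σ₂ : Perm (Set.Ioi w))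

theorem glueAt_apply_of_lt {a : α} (ha : a < w) : glueAt w σ₁ σ₂ a = σ₁ ⟨a, ha⟩ := by
  rw [glueAt, mul_apply, ofSubtype_apply_of_not_mem σ₂ (not_lt.2 ha.le),
    ofSubtype_apply_of_mem σ₁ ha]

theorem glueAt_apply_self : glueAt w σ₁ σ₂ w = w := by
  rw [glueAt, mul_apply, ofSubtype_apply_of_not_mem σ₂ (lt_irrefl w),
    ofSubtype_apply_of_not_mem σ₁ (lt_irrefl w)]

theorem glueAt_apply_of_gt {a : α} (ha : w < a) : glueAt w σ₁ σ₂ a = σ₂ ⟨a, ha⟩ := by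
  rw [glueAt, mul_apply, ofSubtype_apply_of_mem σ₂ ha,
    ofSubtype_apply_of_not_mem σ₁ (not_lt.2 (σ₂ ⟨a, ha⟩).2.le)]

theorem isCutPoint_glueAt : (glueAt w σ₁ σ₂).IsCutPoint w := by
  intro a
  rw [glueAt_apply_self]
  rcases lt_trichotomy a w with ha | rfl | ha
  · exact iff_of_true ha (glueAt_apply_of_lt σ₁ σ₂ ha ▸ (σ₁ ⟨a, ha⟩).2)
  · rw [glueAt_apply_self]
  · rw [glueAt_apply_of_gt σ₁ σ₂ ha]
    exact iff_of_false ha.asymm (σ₂ ⟨a, ha⟩).2.asymm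

end glueAt

section Finite

variable [Finite α]

def cutPointEquiv (w : α) :
    {σ : Perm α // σ.IsCutPoint w} ≃ Perm (Set.Iio w) × Perm (Set.Ioi w) where
  toFun σ := (σ.2.restrictIio, σ.2.restrictIoi)
  invFun p := ⟨glueAt w p.1 p.2, isCutPoint_glueAt p.1 p.2⟩
  left_inv := fun ⟨σ, h⟩ => Subtype.ext <| Equiv.ext fun a => by
    rcases lt_trichotomy a w with ha | rfl | ha
    · rw [glueAt_apply_of_lt _ _ ha, IsCutPoint.coe_restrictIio_apply]
    · rw [glueAt_apply_self, h.apply_eq]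
    · rw [glueAt_apply_of_gt _ _ ha, IsCutPoint.coe_restrictIoi_apply]
  right_inv := fun ⟨σ₁, σ₂⟩ => Prod.ext
    (Equiv.ext fun a => Subtype.ext (glueAt_apply_of_lt σ₁ σ₂ a.2))
    (Equiv.ext fun a => Subtype.ext (glueAt_apply_of_gt σ₁ σ₂ a.2))

theorem IsCutPoint.isLeast_cutPoints_iff (h : σ.IsCutPoint w) :
    IsLeast σ.cutPoints w ↔ h.restrictIio.cutPoints = ∅ := by
  rw [h.cutPoints_restrictIio, Set.eq_empty_iff_forall_notMem]
  refine ⟨fun hw b hb => not_le.2 b.2 (hw.2 hb), fun hb => ⟨h, fun a ha => ?_⟩⟩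
  exact not_lt.1 fun haw => hb ⟨a, haw⟩ ha

theorem IsCutPoint.isLeast_and_ncard_cutPoints_iff (h : σ.IsCutPoint w) (t : ℕ) :
    IsLeast σ.cutPoints w ∧ σ.cutPoints.ncard = t + 1 ↔
      h.restrictIio.cutPoints.ncard = 0 ∧ h.restrictIoi.cutPoints.ncard = t := by
  rw [Set.ncard_eq_zero, ← h.isLeast_cutPoints_iff, h.cutPoints_restrictIoi, Set.ncard_subtype,
    Set.ofPred_mem_eq]
  refine and_congr_right fun hw => ?_
  have hsplit : σ.cutPoints = insert w (σ.cutPoints ∩ Set.Ioi w) := by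
    ext a
    refine ⟨fun ha => (hw.2 ha).eq_or_lt.imp Eq.symm fun hwa => ⟨ha, hwa⟩, ?_⟩
    rintro (rfl | ⟨ha, -⟩)
    exacts [hw.1, ha]
  have hw_notMem : w ∉ σ.cutPoints ∩ Set.Ioi w := fun hw' => lt_irrefl w hw'.2
  nth_rw 1 [hsplit]
  rw [Set.ncard_insert_of_notMem hw_notMem, Nat.add_right_cancel_iff]

end Finite

theorem countByCutPoints_succ [Fintype α] (t : ℕ) :
    countByCutPoints α (t + 1) =
      ∑ w : α, countByCutPoints (Set.Iio w) 0 * countByCutPoints (Set.Ioi w) t := by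
  have hleast : ∀ σ : Perm α,
      σ.cutPoints.ncard = t + 1 ↔ ∃ w, IsLeast σ.cutPoints w ∧ σ.cutPoints.ncard = t + 1 := by
    refine fun σ => ⟨fun hσ => ?_, fun ⟨_, _, hσ⟩ => hσ⟩
    have hne : σ.cutPoints.Nonempty := Set.nonempty_of_ncard_ne_zero (by omega)
    obtain ⟨w, hw, hmin⟩ := Set.exists_min_image σ.cutPoints id (Set.toFinite _) hne
    exact ⟨w, ⟨hw, hmin⟩, hσ⟩
  rw [countByCutPoints, Nat.card_congr (Equiv.subtypeEquivRight hleast),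
    Nat.card_subtype_exists_eq_sum fun σ v w hv hw => hv.1.unique hw.1]
  refine Finset.sum_congr rfl fun w _ => ?_
  rw [countByCutPoints, countByCutPoints, ← Nat.card_prod]
  exact Nat.card_congr <| (Equiv.subtypeSubtypeEquivSubtype fun hσ => hσ.1.1).symm.trans <|
    ((cutPointEquiv w).subtypeEquiv fun σ => σ.2.isLeast_and_ncard_cutPoints_iff t).trans
      Equiv.subtypeProdEquivProd

theorem countByCutPoints_congr (e : α ≃o β) (t : ℕ) :
    countByCutPoints α t = countByCutPoints β t := by
  refine Nat.card_congr (e.toEquiv.permCongr.subtypeEquiv fun σ => ?_)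
  have : (e.toEquiv.permCongr σ).cutPoints = e.symm ⁻¹' σ.cutPoints := by
    ext b
    refine ⟨fun h a => ?_, fun h a => ?_⟩
    · simpa [OrderIso.lt_symm_apply] using h (e a)
    · simpa using h (e.symm a)
  rw [this, Set.ncard_preimage_of_injective_subset_range e.symm.injective (by simp)]

theorem countByCutPoints_eq_zero [Finite α] {t : ℕ} (ht : Nat.card α < t) :
    countByCutPoints α t = 0 := by
  rw [countByCutPoints, Nat.card_eq_zero]
  exact Or.inl ⟨fun σ => ht.not_ge (σ.2 ▸ Set.ncard_le_card _)⟩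

end Equiv.Perm

open Equiv.Perm

theorem countByCutPoints_Iio_fin {n : ℕ} (w : Fin n) (t : ℕ) :
    countByCutPoints (Set.Iio w) t = countByCutPoints (Fin w) t :=
  countByCutPoints_congr (Fintype.orderIsoFinOfCardEq _ (by simp)).symm t

theorem countByCutPoints_Ioi_fin {n : ℕ} (w : Fin n) (t : ℕ) :
    countByCutPoints (Set.Ioi w) t = countByCutPoints (Fin (n - 1 - w)) t :=
  countByCutPoints_congr (Fintype.orderIsoFinOfCardEq _ (by simp)).symm t

theorem dominates_singleton_iff_forall_lt_iff {n : ℕ} (π : Equiv.Perm (Fin n)) (v : Fin n) :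
    Dominates (permGraph π) {v} ↔ ∀ u, v < u ↔ π⁻¹ u < π⁻¹ v := by
  refine forall_congr' fun u => ?_
  simp only [Set.mem_singleton_iff, exists_eq_left, permGraph, Equiv.Perm.inv_def]
  rcases lt_trichotomy u v with h | rfl | h
  · have hne : π.symm v ≠ π.symm u := π.symm.injective.ne h.ne'
    grind
  · simp
  · grind

theorem dominates_singleton_iff {n : ℕ} (π : Equiv.Perm (Fin n)) (v : Fin n) :
    Dominates (permGraph π) {v} ↔ (π⁻¹ * Fin.revPerm).IsCutPoint v.rev := by
  rw [dominates_singleton_iff_forall_lt_iff]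
  refine ⟨fun h a => ?_, fun h u => ?_⟩
  · simpa [Fin.lt_rev_iff] using h a.rev
  · simpa [Fin.lt_rev_iff] using h u.rev

theorem fDom_eq_countByCutPoints (n t : ℕ) : fDom n t = countByCutPoints (Fin n) t := by
  refine Nat.card_congr (((Equiv.inv _).trans (Equiv.mulRight Fin.revPerm)).subtypeEquiv
    fun π => ?_)
  have : {v | Dominates (permGraph π) {v}} = Fin.rev ⁻¹' (π⁻¹ * Fin.revPerm).cutPoints :=
    Set.ext fun v => dominates_singleton_iff π v
  rw [this, Set.ncard_preimage_of_injective_subset_range Fin.rev_injective (by simp)]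
  rfl

theorem fDom_eq_zero {m s : ℕ} (h : m < s) : fDom m s = 0 := by
  rw [fDom_eq_countByCutPoints, countByCutPoints_eq_zero (by simpa using h)]

theorem fDom_recursion {n t : ℕ} (ht1 : 1 ≤ t) (ht2 : t ≤ n) :
    fDom n t = ∑ k ∈ Finset.range (n - t + 1), fDom (n - 1 - k) (t - 1) * fDom k 0 := by
  obtain ⟨s, rfl⟩ : ∃ s, t = s + 1 := ⟨t - 1, by omega⟩
  have hvanish : ∀ k ∈ Finset.range n, k ∉ Finset.range (n - (s + 1) + 1) →
      fDom (n - 1 - k) (s + 1 - 1) * fDom k 0 = 0 := fun k hk hk' => by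
    simp only [Finset.mem_range] at hk hk'
    rw [fDom_eq_zero (by omega), zero_mul]
  rw [Finset.sum_subset (Finset.range_subset_range.2 (by omega)) hvanish,
    ← Fin.sum_univ_eq_sum_range, fDom_eq_countByCutPoints, countByCutPoints_succ]
  refine Finset.sum_congr rfl fun w _ => ?_
  rw [countByCutPoints_Iio_fin, countByCutPoints_Ioi_fin, fDom_eq_countByCutPoints,
    fDom_eq_countByCutPoints, Nat.add_sub_cancel, mul_comm]
end

section
/- Let π ∈ S_n and let G_π be its permutation graph. Suppose u < v, u and v are not adjacent in G_π, and {u,v} is a dominating set of G_π. Then: (1) every private neighbor of u (a vertex whose closed neighborhood intersects {u,v} exactly in {u}) is less than v; (2) every private neighbor of v is greater than u; and (3) every shared neighbor of u and v (a vertex adjacent to both) is either less than u or greater than v. -/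
/-! For `u < v` in `permGraph π`, non-adjacency means `π⁻¹ u < π⁻¹ v`. Each claim then follows by
chaining this with the inequalities that encode the adjacencies of `x`: a contradiction comes from
transitivity of `<` on the vertices and on the positions `π⁻¹`. -/

theorem closedNbhd_inter_pair_eq_singleton_iff {V : Type*} {G : SimpleGraph V} {x u v : V}
    (huv : u ≠ v) :
    closedNbhd G x ∩ {u, v} = {u} ↔ u ∈ closedNbhd G x ∧ v ∉ closedNbhd G x := by
  constructor
  · intro h
    refine ⟨(h.symm ▸ rfl : u ∈ closedNbhd G x ∩ {u, v}).1, fun hv => huv.symm ?_⟩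
    exact (h ▸ ⟨hv, Or.inr rfl⟩ : v ∈ ({u} : Set V))
  · rintro ⟨hu, hv⟩
    ext y
    simp only [Set.mem_inter_iff, Set.mem_insert_iff, Set.mem_singleton_iff]
    constructor
    · rintro ⟨hy, rfl | rfl⟩
      · rfl
      · exact absurd hy hv
    · rintro rfl
      exact ⟨hu, Or.inl rfl⟩

section PermGraph

variable {n : ℕ} {π : Equiv.Perm (Fin n)} {u v x : Fin n}

theorem permGraph_adj_iff_of_lt (h : u < v) : (permGraph π).Adj u v ↔ π.symm v < π.symm u := by
  simp only [permGraph, h, h.not_gt, true_and, false_and, or_false]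

theorem permGraph_not_adj_iff_of_lt (h : u < v) :
    ¬ (permGraph π).Adj u v ↔ π.symm u < π.symm v := by
  rw [permGraph_adj_iff_of_lt h, not_lt, le_iff_lt_or_eq, or_iff_left]
  exact fun heq => h.ne (π.symm.injective heq)

theorem permGraph_adj_trans (huv : u < v) (hvx : v < x) (h₁ : (permGraph π).Adj u v)
    (h₂ : (permGraph π).Adj v x) : (permGraph π).Adj u x :=
  (permGraph_adj_iff_of_lt (huv.trans hvx)).2 <|
    ((permGraph_adj_iff_of_lt hvx).1 h₂).trans ((permGraph_adj_iff_of_lt huv).1 h₁)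

theorem permGraph_adj_right_of_adj_left (huv : u < v) (hnuv : ¬ (permGraph π).Adj u v)
    (hvx : v < x) (hux : (permGraph π).Adj u x) : (permGraph π).Adj v x :=
  (permGraph_adj_iff_of_lt hvx).2 <|
    ((permGraph_adj_iff_of_lt (huv.trans hvx)).1 hux).trans
      ((permGraph_not_adj_iff_of_lt huv).1 hnuv)

theorem permGraph_adj_left_of_adj_right (huv : u < v) (hnuv : ¬ (permGraph π).Adj u v)
    (hxu : x < u) (hxv : (permGraph π).Adj x v) : (permGraph π).Adj x u :=
  (permGraph_adj_iff_of_lt hxu).2 <|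
    ((permGraph_not_adj_iff_of_lt huv).1 hnuv).trans
      ((permGraph_adj_iff_of_lt (hxu.trans huv)).1 hxv)

theorem permGraph_lt_of_mem_closedNbhd_of_notMem (huv : u < v) (hnuv : ¬ (permGraph π).Adj u v)
    (hu : u ∈ closedNbhd (permGraph π) x) (hv : v ∉ closedNbhd (permGraph π) x) : x < v := by
  simp only [closedNbhd, Set.mem_ofPred_eq, not_or] at hu hv
  by_contra! hvx
  have hvx : v < x := lt_of_le_of_ne hvx hv.1
  rcases hu with rfl | hxu
  · exact hvx.not_gt huv
  · exact hv.2 (permGraph_adj_right_of_adj_left huv hnuv hvx hxu.symm).symm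

theorem permGraph_lt_of_notMem_closedNbhd_of_mem (huv : u < v) (hnuv : ¬ (permGraph π).Adj u v)
    (hu : u ∉ closedNbhd (permGraph π) x) (hv : v ∈ closedNbhd (permGraph π) x) : u < x := by
  simp only [closedNbhd, Set.mem_ofPred_eq, not_or] at hu hv
  by_contra! hxu
  have hxu : x < u := lt_of_le_of_ne hxu (Ne.symm hu.1)
  rcases hv with rfl | hxv
  · exact hxu.not_gt huv
  · exact hu.2 (permGraph_adj_left_of_adj_right huv hnuv hxu hxv)

theorem permGraph_lt_or_gt_of_adj_of_adj (huv : u < v) (hnuv : ¬ (permGraph π).Adj u v)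
    (hxu : (permGraph π).Adj x u) (hxv : (permGraph π).Adj x v) : x < u ∨ v < x := by
  rcases lt_trichotomy x u with hlt | rfl | hux
  · exact Or.inl hlt
  · exact absurd hxu (SimpleGraph.irrefl _)
  rcases lt_trichotomy x v with hxv' | rfl | hvx
  · exact absurd (permGraph_adj_trans hux hxv' hxu.symm hxv) hnuv
  · exact absurd hxv (SimpleGraph.irrefl _)
  · exact Or.inr hvx

end PermGraph

theorem dom_pair_nonadjacent_neighbors_general {n : ℕ} (π : Equiv.Perm (Fin n)) (u v : Fin n)
    (huv : u < v) (hadj : ¬ (permGraph π).Adj u v) :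
    (∀ x, closedNbhd (permGraph π) x ∩ {u, v} = {u} → x < v) ∧
    (∀ x, closedNbhd (permGraph π) x ∩ {u, v} = {v} → u < x) ∧
    (∀ x, (permGraph π).Adj x u → (permGraph π).Adj x v → x < u ∨ v < x) := by
  refine ⟨fun x hx => ?_, fun x hx => ?_, fun x => permGraph_lt_or_gt_of_adj_of_adj huv hadj⟩
  · obtain ⟨hu, hv⟩ := (closedNbhd_inter_pair_eq_singleton_iff huv.ne).1 hx
    exact permGraph_lt_of_mem_closedNbhd_of_notMem huv hadj hu hv
  · rw [Set.pair_comm] at hx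
    obtain ⟨hv, hu⟩ := (closedNbhd_inter_pair_eq_singleton_iff huv.ne').1 hx
    exact permGraph_lt_of_notMem_closedNbhd_of_mem huv hadj hu hv

theorem dom_pair_nonadjacent_neighbors {n : ℕ} (π : Equiv.Perm (Fin n)) (u v : Fin n)
    (huv : u < v) (hadj : ¬ (permGraph π).Adj u v)
    (hdom : Dominates (permGraph π) {u, v}) :
    (∀ x, closedNbhd (permGraph π) x ∩ {u, v} = {u} → x < v) ∧
    (∀ x, closedNbhd (permGraph π) x ∩ {u, v} = {v} → u < x) ∧
    (∀ x, (permGraph π).Adj x u → (permGraph π).Adj x v → x < u ∨ v < x) :=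
  dom_pair_nonadjacent_neighbors_general π u v huv hadj
end

section
/- Let π ∈ S_n and let G_π be its permutation graph. Suppose u < v, u and v are adjacent in G_π, and {u,v} is a dominating set of G_π. Then every private neighbor of u (other than u itself) is greater than u, and every private neighbor of v (other than v itself) is less than v. -/
/-!
A private neighbour `x` of one vertex of the pair is adjacent to it and not to the other. In a
permutation graph, adjacency is transitive along increasing chains `a < b < c` (two inversions
compose to one), so `x < u` would make `x` adjacent to `v` through `u`, and `v < x` would make `u`
adjacent to `x` through `v`.
-/

namespace SimpleGraph

theorem adj_and_not_adj_of_closedNbhd_inter_pair_eq_singleton {V : Type*} {G : SimpleGraph V}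
    {x u v : V} (hxu : x ≠ u) (huv : u ≠ v) (h : closedNbhd G x ∩ {u, v} = {u}) :
    G.Adj x u ∧ ¬G.Adj x v := by
  have hu : u ∈ closedNbhd G x ∩ {u, v} := h ▸ rfl
  refine ⟨hu.1.resolve_left hxu.symm, fun hxv => huv.symm ?_⟩
  have hv : v ∈ closedNbhd G x ∩ {u, v} := ⟨Or.inr hxv, Or.inr rfl⟩
  rwa [h] at hv

end SimpleGraph

namespace permGraph

variable {n : ℕ} {π : Equiv.Perm (Fin n)}

theorem adj_iff_of_lt {i j : Fin n} (hij : i < j) :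
    (permGraph π).Adj i j ↔ π.symm j < π.symm i := by
  simp only [permGraph, hij, true_and, hij.not_gt, false_and, or_false]

theorem adj_trans_of_lt {a b c : Fin n} (hab : a < b) (hbc : b < c)
    (h₁ : (permGraph π).Adj a b) (h₂ : (permGraph π).Adj b c) : (permGraph π).Adj a c := by
  rw [adj_iff_of_lt hab] at h₁
  rw [adj_iff_of_lt hbc] at h₂
  exact (adj_iff_of_lt (hab.trans hbc)).2 (h₂.trans h₁)

end permGraph

open SimpleGraph in
theorem dom_pair_adjacent_neighbors_general {n : ℕ} (π : Equiv.Perm (Fin n)) (u v : Fin n)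
    (huv : u < v) (hadj : (permGraph π).Adj u v) :
    (∀ x, x ≠ u → closedNbhd (permGraph π) x ∩ {u, v} = {u} → u < x) ∧
    (∀ x, x ≠ v → closedNbhd (permGraph π) x ∩ {u, v} = {v} → x < v) := by
  constructor
  · intro x hxu hpriv
    obtain ⟨hxu_adj, hxv⟩ :=
      adj_and_not_adj_of_closedNbhd_inter_pair_eq_singleton hxu huv.ne hpriv
    by_contra! hle
    exact hxv (permGraph.adj_trans_of_lt (hle.lt_of_ne hxu) huv hxu_adj hadj)
  · intro x hxv hpriv
    rw [Set.pair_comm] at hpriv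
    obtain ⟨hxv_adj, hxu⟩ :=
      adj_and_not_adj_of_closedNbhd_inter_pair_eq_singleton hxv huv.ne' hpriv
    by_contra! hle
    exact hxu (permGraph.adj_trans_of_lt huv (hle.lt_of_ne' hxv) hadj hxv_adj.symm).symm

theorem dom_pair_adjacent_neighbors {n : ℕ} (π : Equiv.Perm (Fin n)) (u v : Fin n)
    (huv : u < v) (hadj : (permGraph π).Adj u v)
    (hdom : Dominates (permGraph π) {u, v}) :
    (∀ x, x ≠ u → closedNbhd (permGraph π) x ∩ {u, v} = {u} → u < x) ∧
    (∀ x, x ≠ v → closedNbhd (permGraph π) x ∩ {u, v} = {v} → x < v) :=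
  dom_pair_adjacent_neighbors_general π u v huv hadj
end

section
/- Let π ∈ S_n and A = {a_1 < a_2 < ... < a_k} be an efficient dominating set of the permutation graph G_π. Then every private neighbor of a_1 is less than a_2, every private neighbor of a_k is greater than a_{k-1}, and for 2 ≤ i ≤ k−1, every private neighbor of a_i lies strictly between a_{i-1} and a_{i+1}. -/
/-!
Order the vertices of `G_π` by value. This is a cocomparability ordering: if `u < v < w` and
`u ~ w`, then `π⁻¹ v` cannot lie on the far side of both `π⁻¹ u` and `π⁻¹ w`, so `u ~ v` or
`v ~ w`. Now let `x` be a private neighbour of `d = a_i` and let `e = a_j` be another element of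
`A`. If `e` lay between `d` and `x`, the edge `d x` (or `d = x`, excluded since `e ≠ d`) would
force an edge `d e` or `e x`: the first contradicts `N[d] ∩ N[e] = ∅`, the second privacy.
-/

namespace SimpleGraph

variable {α : Type*} [LinearOrder α]

/-- Also called an umbrella-free ordering. -/
def IsCocomparabilityOrdering (G : SimpleGraph α) : Prop :=
  ∀ ⦃u v w : α⦄, u < v → v < w → G.Adj u w → G.Adj u v ∨ G.Adj v w

variable {G : SimpleGraph α}

theorem IsCocomparabilityOrdering.notMem_uIcc (hG : G.IsCocomparabilityOrdering) {d e x : α}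
    (hde : Disjoint (closedNbhd G d) (closedNbhd G e)) (hd : d ∈ closedNbhd G x)
    (he : e ∉ closedNbhd G x) : e ∉ Set.uIcc d x := by
  have he_nbhd_d : e ∉ closedNbhd G d := hde.notMem_of_mem_right (Or.inl rfl)
  have hed : e ≠ d := fun h => he_nbhd_d (Or.inl h)
  have hex : e ≠ x := fun h => he (Or.inl h)
  intro he_mem
  have hxd : G.Adj x d := hd.resolve_left <| by
    rintro rfl
    exact hed (by simpa using he_mem)
  rcases Set.mem_uIcc.1 he_mem with ⟨hd_le, hle_x⟩ | ⟨hx_le, hle_d⟩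
  · rcases hG (hd_le.lt_of_ne hed.symm) (hle_x.lt_of_ne hex) hxd.symm with h | h
    · exact he_nbhd_d (Or.inr h)
    · exact he (Or.inr h.symm)
  · rcases hG (hx_le.lt_of_ne hex.symm) (hle_d.lt_of_ne hed) hxd with h | h
    · exact he (Or.inr h)
    · exact he_nbhd_d (Or.inr h.symm)

theorem IsCocomparabilityOrdering.notMem_uIcc_of_inter_eq_singleton
    (hG : G.IsCocomparabilityOrdering) {A : Set α} {d e x : α}
    (hde : Disjoint (closedNbhd G d) (closedNbhd G e)) (hx : closedNbhd G x ∩ A = {d})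
    (heA : e ∈ A) : e ∉ Set.uIcc d x := by
  have hd : d ∈ closedNbhd G x ∩ A := hx ▸ rfl
  have hed : e ≠ d := fun h => hde.ne_of_mem (Or.inl rfl) (Or.inl rfl) h.symm
  refine hG.notMem_uIcc hde hd.1 fun he => hed ?_
  have he' : e ∈ closedNbhd G x ∩ A := ⟨he, heA⟩
  rwa [hx] at he'

theorem IsCocomparabilityOrdering.lt_of_inter_eq_singleton_of_lt
    (hG : G.IsCocomparabilityOrdering) {A : Set α} {d e x : α} (hlt : d < e)
    (hde : Disjoint (closedNbhd G d) (closedNbhd G e)) (hx : closedNbhd G x ∩ A = {d})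
    (heA : e ∈ A) : x < e :=
  lt_of_not_ge fun hle =>
    hG.notMem_uIcc_of_inter_eq_singleton hde hx heA (Set.mem_uIcc_of_le hlt.le hle)

theorem IsCocomparabilityOrdering.lt_of_inter_eq_singleton_of_gt
    (hG : G.IsCocomparabilityOrdering) {A : Set α} {d e x : α} (hlt : e < d)
    (hde : Disjoint (closedNbhd G d) (closedNbhd G e)) (hx : closedNbhd G x ∩ A = {d})
    (heA : e ∈ A) : e < x :=
  lt_of_not_ge fun hle =>
    hG.notMem_uIcc_of_inter_eq_singleton hde hx heA (Set.mem_uIcc_of_ge hle hlt.le)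

end SimpleGraph

theorem permGraph_isCocomparabilityOrdering {n : ℕ} (π : Equiv.Perm (Fin n)) :
    (permGraph π).IsCocomparabilityOrdering := by
  rintro u v w huv hvw (⟨-, hwu⟩ | ⟨hwu, -⟩)
  · rcases lt_or_ge (π.symm v) (π.symm u) with hvu | huv'
    · exact Or.inl (Or.inl ⟨huv, hvu⟩)
    · exact Or.inr (Or.inl ⟨hvw, hwu.trans_le huv'⟩)
  · exact absurd (huv.trans hvw) hwu.not_gt

theorem efficient_dominating_private_neighbors {n k : ℕ} (π : Equiv.Perm (Fin n))
    (a : Fin k → Fin n) (ha : StrictMono a) (hk : 2 ≤ k)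
    (heff : ∀ i j : Fin k, i ≠ j →
      Disjoint (closedNbhd (permGraph π) (a i)) (closedNbhd (permGraph π) (a j))) :
    (∀ x, closedNbhd (permGraph π) x ∩ Set.range a = {a ⟨0, by omega⟩} →
        x < a ⟨1, by omega⟩) ∧
    (∀ x, closedNbhd (permGraph π) x ∩ Set.range a = {a ⟨k - 1, by omega⟩} →
        a ⟨k - 2, by omega⟩ < x) ∧
    (∀ i : ℕ, ∀ _h1 : 1 ≤ i, ∀ _h2 : i ≤ k - 2, ∀ x,
        closedNbhd (permGraph π) x ∩ Set.range a = {a ⟨i, by omega⟩} →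
        a ⟨i - 1, by omega⟩ < x ∧ x < a ⟨i + 1, by omega⟩) := by
  have hG := permGraph_isCocomparabilityOrdering π
  have right {i j : Fin k} (hij : i < j) {x}
      (hx : closedNbhd (permGraph π) x ∩ Set.range a = {a i}) : x < a j :=
    hG.lt_of_inter_eq_singleton_of_lt (ha hij) (heff i j hij.ne) hx ⟨j, rfl⟩
  have left {i j : Fin k} (hji : j < i) {x}
      (hx : closedNbhd (permGraph π) x ∩ Set.range a = {a i}) : a j < x :=
    hG.lt_of_inter_eq_singleton_of_gt (ha hji) (heff i j hji.ne') hx ⟨j, rfl⟩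
  refine ⟨fun x hx => right (Fin.mk_lt_mk.2 (by omega)) hx,
    fun x hx => left (Fin.mk_lt_mk.2 (by omega)) hx,
    fun i _ _ x hx =>
      ⟨left (Fin.mk_lt_mk.2 (by omega)) hx, right (Fin.mk_lt_mk.2 (by omega)) hx⟩⟩
end

section
/- Let π ∈ S_n and 1 ≤ i ≤ n. If the degree of vertex i in the permutation graph G_π equals k, then |π⁻¹(i) − i| ≤ k and π⁻¹(i) − i ≡ k (mod 2). In particular, if i has degree 1 (is a leaf), then π⁻¹(i) ∈ {i−1, i+1}. -/
/-! The neighbours of `i` in `permGraph π` are exactly the symmetric difference of the sets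
`{j | j < i}` and `{j | π⁻¹ j < π⁻¹ i}`, of sizes `i` and `π⁻¹ i`. For any two finite sets,
`#s - #t = #(s \ t) - #(t \ s)` while `#(s ∆ t) = #(s \ t) + #(t \ s)`, which gives both the
bound and the parity. -/

open Finset
open scoped symmDiff

namespace Finset

variable {α : Type*} [DecidableEq α] (s t : Finset α)

lemma card_symmDiff : #(s ∆ t) = #(s \ t) + #(t \ s) :=
  card_union_of_disjoint disjoint_sdiff_sdiff

lemma intCast_card_sub_card : (#s : ℤ) - #t = #(s \ t) - #(t \ s) := by
  have hs := card_sdiff_add_card_inter s t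
  have ht := card_sdiff_add_card_inter t s
  rw [inter_comm] at ht
  omega

lemma natAbs_card_sub_card_le_card_symmDiff : ((#s : ℤ) - #t).natAbs ≤ #(s ∆ t) := by
  rw [intCast_card_sub_card, card_symmDiff]
  omega

lemma card_sub_card_emod_two : ((#s : ℤ) - #t) % 2 = (#(s ∆ t) : ℤ) % 2 := by
  rw [intCast_card_sub_card, card_symmDiff]
  omega

end Finset

lemma permGraph_neighborSet {n : ℕ} (π : Equiv.Perm (Fin n)) (i : Fin n) :
    (permGraph π).neighborSet i = ↑((Iio (π.symm i)).map π.toEmbedding ∆ Iio i) := by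
  ext j
  simp only [SimpleGraph.mem_neighborSet, permGraph, coe_symmDiff, Set.mem_symmDiff, mem_coe,
    mem_map_equiv, mem_Iio, not_lt]
  have heq : j = i ↔ π.symm j = π.symm i := π.symm.injective.eq_iff.symm
  constructor
  · rintro (⟨hgt, hπ⟩ | ⟨hlt, hπ⟩)
    · exact Or.inl ⟨hπ, hgt.le⟩
    · exact Or.inr ⟨hlt, hπ.le⟩
  · rintro (⟨hπ, hge⟩ | ⟨hlt, hπ⟩)
    · exact Or.inl ⟨lt_of_le_of_ne hge fun h => hπ.ne (heq.mp h.symm), hπ⟩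
    · exact Or.inr ⟨hlt, lt_of_le_of_ne hπ fun h => hlt.ne (heq.mpr h.symm)⟩

lemma deg_permGraph {n : ℕ} (π : Equiv.Perm (Fin n)) (i : Fin n) :
    deg (permGraph π) i = #((Iio (π.symm i)).map π.toEmbedding ∆ Iio i) := by
  rw [deg, permGraph_neighborSet, Set.ncard_coe_finset]

theorem degree_position_bound {n : ℕ} (π : Equiv.Perm (Fin n)) (i : Fin n) (k : ℕ)
    (hdeg : deg (permGraph π) i = k) :
    (((π.symm i : ℤ) - (i : ℤ)).natAbs ≤ k ∧
      ((π.symm i : ℤ) - (i : ℤ)) % 2 = (k : ℤ) % 2) ∧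
    (k = 1 → (π.symm i : ℤ) = (i : ℤ) - 1 ∨ (π.symm i : ℤ) = (i : ℤ) + 1) := by
  set s := (Iio (π.symm i)).map π.toEmbedding
  have hs : #s = (π.symm i : ℕ) := by rw [card_map, Fin.card_Iio]
  have ht : #(Iio i) = (i : ℕ) := Fin.card_Iio i
  have hk : #(s ∆ Iio i) = k := (deg_permGraph π i).symm.trans hdeg
  have hbound := natAbs_card_sub_card_le_card_symmDiff s (Iio i)
  have hparity := card_sub_card_emod_two s (Iio i)
  rw [hs, ht, hk] at hbound hparity
  refine ⟨⟨hbound, hparity⟩, fun hk1 => ?_⟩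
  subst hk1
  omega
end

section
/- Let n ≥ 6 be an even integer and let π ∈ S_n be such that the permutation graph G_π is connected with domination number n/2. If 2 ≤ i ≤ n−2 and both i and i+1 are leaves of G_π, then π⁻¹(i) = i−1 and π⁻¹(i+1) = i+2. -/
/-! A leaf `v` of `G_π` has a single inversion partner, and counting the values below `v`
against the positions before `v` gives `v + #upper = π⁻¹ v + #lower`, so `π⁻¹ v = v ± 1`.
For the leaves `i, i + 1` only one of the four sign combinations survives. If
`π⁻¹ i = i + 1` and `π⁻¹ (i + 1) = i`, the two leaves are adjacent and form a `K₂` component.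
If their positions are consecutive like their values, they are non-adjacent twins with a common
neighbour `z`; then the vertices at odd distance from `i`, and the vertices at even distance
other than `i, i + 1` together with `z`, are two dominating sets of total size `n - 1`, so the
domination number is below `n / 2`. -/

open Finset

namespace SimpleGraph

variable {V : Type*} {G : SimpleGraph V}

theorem Connected.exists_adj_dist_add_one_eq (hconn : G.Connected) {x v : V} (hv : v ≠ x) :
    ∃ w, G.Adj v w ∧ G.dist x w + 1 = G.dist x v := by
  obtain ⟨p, hp⟩ := hconn.exists_walk_length_eq_dist v x
  cases p with
  | nil => exact absurd rfl hv
  | @cons _ w _ hadj q =>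
    refine ⟨w, hadj, le_antisymm ?_ ?_⟩
    · have := dist_le q.reverse
      rw [Walk.length_reverse] at this
      rw [dist_comm (u := x) (v := v), ← hp, Walk.length_cons]
      omega
    · have := hconn.dist_triangle (u := x) (v := w) (w := v)
      rwa [dist_comm (u := w), dist_eq_one_iff_adj.mpr hadj] at this

theorem Connected.eq_or_eq_of_neighborSet_eq_singleton (hconn : G.Connected) {x y : V}
    (hx : G.neighborSet x = {y}) (hy : G.neighborSet y = {x}) (v : V) : v = x ∨ v = y := by
  by_contra hv
  obtain ⟨p⟩ := hconn.preconnected x v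
  obtain ⟨d, -, hd, hd'⟩ := p.exists_boundary_dart {x, y} (by simp) (by simpa using hv)
  have hadj : d.snd ∈ G.neighborSet d.fst := d.adj
  rcases hd with hd | hd <;> rw [hd] at hadj <;> simp_all

end SimpleGraph

open SimpleGraph

section Domination

variable {V : Type*} {G : SimpleGraph V}

theorem domNumber_le_card [Fintype V] {D : Finset V} (hD : Dominates G ↑D) :
    domNumber G ≤ #D :=
  Nat.sInf_le ⟨D, rfl, hD⟩

theorem neighborSet_eq_singleton_of_deg_eq_one {x z : V} (hx : deg G x = 1) (hxz : G.Adj x z) :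
    G.neighborSet x = {z} := by
  obtain ⟨a, ha⟩ := Set.ncard_eq_one.mp hx
  have hz : z ∈ G.neighborSet x := hxz
  rw [ha, Set.mem_singleton_iff] at hz
  rw [ha, hz]

variable [Fintype V]

theorem dominates_odd_dist (hconn : G.Connected) {x z : V} (hxz : G.Adj x z) :
    Dominates G ↑(univ.filter fun v => Odd (G.dist x v)) := by
  intro v
  by_cases hv : Odd (G.dist x v)
  · left; simpa using hv
  right
  by_cases hvx : v = x
  · subst hvx
    exact ⟨z, by simp [dist_eq_one_iff_adj.mpr hxz], hxz⟩
  obtain ⟨w, hvw, hw⟩ := hconn.exists_adj_dist_add_one_eq hvx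
  rw [← hw, Nat.odd_add_one, not_not] at hv
  exact ⟨w, by simpa using hv, hvw⟩

theorem dominates_even_dist_of_twin_leaves [DecidableEq V] (hconn : G.Connected) {x y z : V}
    (hx : G.neighborSet x = {z}) (hy : G.neighborSet y = {z}) :
    Dominates G ↑(insert z (((univ.filter fun v => Even (G.dist x v)).erase x).erase y)) := by
  have hxz : G.Adj x z := by simp [← mem_neighborSet, hx]
  have hyz : G.Adj y z := by simp [← mem_neighborSet, hy]
  intro v
  by_cases hv : Even (G.dist x v)
  · by_cases hvxy : v = x ∨ v = y
    · right
      refine ⟨z, by simp, ?_⟩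
      rcases hvxy with rfl | rfl <;> assumption
    · left
      obtain ⟨hvx, hvy⟩ := not_or.mp hvxy
      simp [hv, hvx, hvy]
  have hvx : v ≠ x := by rintro rfl; simp at hv
  obtain ⟨w, hvw, hw⟩ := hconn.exists_adj_dist_add_one_eq hvx
  by_cases hwxy : w = x ∨ w = y
  · left
    have hv' : v ∈ G.neighborSet w := hvw.symm
    rcases hwxy with rfl | rfl <;> simp_all
  · right
    obtain ⟨hwx, hwy⟩ := not_or.mp hwxy
    rw [← hw, Nat.even_add_one, not_not] at hv
    exact ⟨w, by simp [hwx, hwy, hv], hvw⟩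

theorem two_mul_domNumber_lt_card_of_twin_leaves [DecidableEq V] (hconn : G.Connected)
    {x y z : V} (hxy : x ≠ y)
    (hx : G.neighborSet x = {z}) (hy : G.neighborSet y = {z}) :
    2 * domNumber G < Fintype.card V := by
  have hxz : G.Adj x z := by simp [← mem_neighborSet, hx]
  set E := univ.filter fun v => Even (G.dist x v)
  set O := univ.filter fun v => ¬Even (G.dist x v)
  have hcard : #E + #O = Fintype.card V := card_filter_add_card_filter_not _
  have hO : domNumber G ≤ #O := by
    simpa only [O, Nat.not_even_iff_odd] using domNumber_le_card (dominates_odd_dist hconn hxz)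
  have hdist_xy : G.dist x y = 2 := by
    obtain ⟨w, hyw, hw⟩ := hconn.exists_adj_dist_add_one_eq hxy.symm
    have : w ∈ G.neighborSet y := hyw
    rw [hy, Set.mem_singleton_iff] at this
    rw [← hw, this, dist_eq_one_iff_adj.mpr hxz]
  have hxE : x ∈ E := by simp [E]
  have hyE : y ∈ E.erase x := by simp [E, hdist_xy, hxy.symm]
  have hE : domNumber G + 1 ≤ #E := by
    have := (domNumber_le_card (dominates_even_dist_of_twin_leaves hconn hx hy)).trans
      (card_insert_le _ _)
    rw [card_erase_of_mem hyE, card_erase_of_mem hxE] at this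
    have : 1 < #E := one_lt_card.mpr ⟨x, hxE, y, mem_of_mem_erase hyE, hxy⟩
    omega
  omega

end Domination

section PermGraph

variable {n : ℕ} (π : Equiv.Perm (Fin n))

theorem permGraph_adj {a b : Fin n} :
    (permGraph π).Adj a b ↔ (a < b ∧ π.symm b < π.symm a) ∨ (b < a ∧ π.symm a < π.symm b) :=
  Iff.rfl

def lowerNeighbors (v : Fin n) : Finset (Fin n) :=
  univ.filter fun j => j < v ∧ π.symm v < π.symm j

def upperNeighbors (v : Fin n) : Finset (Fin n) :=
  univ.filter fun j => v < j ∧ π.symm j < π.symm v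

theorem deg_permGraph_s11 (v : Fin n) :
    deg (permGraph π) v = #(lowerNeighbors π v) + #(upperNeighbors π v) := by
  have hN : (permGraph π).neighborSet v = ↑(lowerNeighbors π v ∪ upperNeighbors π v) := by
    ext j
    simp only [mem_neighborSet, permGraph_adj, lowerNeighbors, upperNeighbors, coe_union,
      coe_filter, mem_univ, true_and, Set.mem_union, Set.mem_ofPred_eq]
    tauto
  rw [deg, hN, Set.ncard_coe_finset, card_union_of_disjoint]
  exact disjoint_filter.mpr fun j _ hlow hup => lt_asymm hlow.1 hup.1

theorem val_add_card_upperNeighbors (v : Fin n) :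
    (v : ℕ) + #(upperNeighbors π v) = (π.symm v : ℕ) + #(lowerNeighbors π v) := by
  set A := Iio v
  set B := (Iio (π.symm v)).map π.toEmbedding
  have hB : #B = π.symm v := by simp [B]
  have hlow : lowerNeighbors π v = A \ B := by
    ext j
    simp only [lowerNeighbors, A, B, mem_filter, mem_univ, true_and, mem_sdiff, mem_Iio,
      mem_map_equiv, not_lt]
    exact and_congr_right fun hj => ⟨le_of_lt, fun h => h.lt_of_ne (π.symm.injective.ne hj.ne')⟩
  have hup : upperNeighbors π v = B \ A := by
    ext j
    simp only [upperNeighbors, A, B, mem_filter, mem_univ, true_and, mem_sdiff, mem_Iio,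
      mem_map_equiv, not_lt]
    exact ⟨fun h => ⟨h.2, h.1.le⟩, fun h => ⟨h.2.lt_of_ne fun hvj => (hvj ▸ h.1).false, h.1⟩⟩
  rw [hlow, hup, ← Fin.card_Iio v, ← hB, add_comm, card_sdiff_add_card, add_comm #B,
    card_sdiff_add_card, union_comm]

theorem val_symm_eq_of_deg_permGraph_eq_one {v : Fin n} (hv : deg (permGraph π) v = 1) :
    (π.symm v : ℕ) + 1 = v ∨ (v : ℕ) + 1 = π.symm v := by
  have := val_add_card_upperNeighbors π v
  rw [deg_permGraph_s11] at hv
  omega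

theorem permGraph_neighborSet_eq_of_consecutive {u w : Fin n} (h : (u : ℕ) + 1 = w)
    (hπ : (π.symm u : ℕ) + 1 = π.symm w) :
    (permGraph π).neighborSet u = (permGraph π).neighborSet w := by
  ext z
  have hu : (z : ℕ) = u ↔ (π.symm z : ℕ) = π.symm u := by simp [Fin.val_inj]
  have hw : (z : ℕ) = w ↔ (π.symm z : ℕ) = π.symm w := by simp [Fin.val_inj]
  simp only [mem_neighborSet, permGraph_adj, Fin.lt_def]
  omega

end PermGraph

theorem consecutive_leaves_positions {n : ℕ} (hev : Even n)
    (π : Equiv.Perm (Fin n)) (hconn : (permGraph π).Connected)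
    (hdom : domNumber (permGraph π) = n / 2)
    (i : ℕ) (hi2 : i + 2 ≤ n - 1)
    (hl1 : deg (permGraph π) ⟨i, by omega⟩ = 1)
    (hl2 : deg (permGraph π) ⟨i + 1, by omega⟩ = 1) :
    (π.symm ⟨i, by omega⟩ : ℕ) = i - 1 ∧ (π.symm ⟨i + 1, by omega⟩ : ℕ) = i + 2 := by
  set u : Fin n := ⟨i, by omega⟩
  set w : Fin n := ⟨i + 1, by omega⟩
  have not_twins : (π.symm u : ℕ) + 1 ≠ π.symm w := by
    intro h
    obtain ⟨z, hz⟩ := Set.ncard_eq_one.mp hl1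
    have huw : u ≠ w := by simp [u, w, Fin.ext_iff]
    have hw := permGraph_neighborSet_eq_of_consecutive π rfl h ▸ hz
    have := two_mul_domNumber_lt_card_of_twin_leaves hconn huw hz hw
    rw [hdom, Fintype.card_fin, Nat.two_mul_div_two_of_even hev] at this
    exact this.false
  have not_adj : ¬(permGraph π).Adj u w := by
    intro h
    have := hconn.eq_or_eq_of_neighborSet_eq_singleton
      (neighborSet_eq_singleton_of_deg_eq_one hl1 h)
      (neighborSet_eq_singleton_of_deg_eq_one hl2 h.symm) ⟨i + 2, by omega⟩
    simp [u, w, Fin.ext_iff] at this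
  have hu := val_symm_eq_of_deg_permGraph_eq_one π hl1
  have hw := val_symm_eq_of_deg_permGraph_eq_one π hl2
  have hu_val : (u : ℕ) = i := rfl
  have hw_val : (w : ℕ) = i + 1 := rfl
  simp only [permGraph_adj, Fin.lt_def] at not_adj
  omega
end

section
/- For every positive integer n and every k with 1 ≤ k ≤ ⌊n/2⌋, there exists a permutation π ∈ S_n whose permutation graph G_π is connected and has domination number exactly k. -/
/-! ### Auxiliary machinery -/

/-- Bottom-line position of value `v` in a permutation diagram of a caterpillar
with spine `c_1, …, c_k`, where `c_1` carries `r+1` pendant leaves and each other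
spine vertex carries one pendant leaf; `n = 2k + r`. -/
def fcatN (r k v : ℕ) : ℕ :=
  if v ≤ r then v + 1
  else if v = r + 2 then 0
  else if v = r + (2 * k - 1) ∧ k % 2 = 1 then v - 2
  else if v = r + (2 * k - 3) ∧ k % 2 = 0 then v + 2
  else if (v - r) % 4 = 1 then v + 3
  else if (v - r) % 4 = 2 then v - 3
  else if (v - r) % 4 = 3 then v - 1
  else v + 1

/-- Index (value) of the `j`-th spine vertex, `1 ≤ j ≤ k`. -/
def uN (r k j : ℕ) : ℕ :=
  if j % 2 = 0 then r + (2 * j - 3)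
  else if j = k then r + (2 * k - 1)
  else r + 2 * j

/-- Index (value) of a chosen pendant leaf attached to spine vertex `j`. -/
def lN (r k j : ℕ) : ℕ :=
  if j = 1 then 0
  else if j % 2 = 0 then r + (2 * j - 1)
  else r + (2 * j - 2)

/-- Value of `fcatN` at spine vertices. -/
def guN (r k j : ℕ) : ℕ :=
  if j = 1 then 0
  else if j % 2 = 1 then r + 2 * j - 3
  else if j = k then r + 2 * k - 1
  else r + 2 * j

/-- Value of `fcatN` at the chosen leaves. -/
def glN (r k j : ℕ) : ℕ :=
  if j = 1 then 1
  else if j % 2 = 0 then r + 2 * j - 2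
  else r + 2 * j - 1

/-- Symmetric ℕ-level adjacency (inversion) relation. -/
def AdjN (r k a b : ℕ) : Prop :=
  (a < b ∧ fcatN r k b < fcatN r k a) ∨ (b < a ∧ fcatN r k a < fcatN r k b)

lemma fcatN_spec (r k v : ℕ) :
    (v ≤ r ∧ fcatN r k v = v + 1) ∨
    (¬ v ≤ r ∧ v = r + 2 ∧ fcatN r k v = 0) ∨
    (¬ v ≤ r ∧ ¬ v = r + 2 ∧ (v = r + (2 * k - 1) ∧ k % 2 = 1) ∧ fcatN r k v = v - 2) ∨
    (¬ v ≤ r ∧ ¬ v = r + 2 ∧ ¬(v = r + (2 * k - 1) ∧ k % 2 = 1) ∧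
      (v = r + (2 * k - 3) ∧ k % 2 = 0) ∧ fcatN r k v = v + 2) ∨
    (¬ v ≤ r ∧ ¬ v = r + 2 ∧ ¬(v = r + (2 * k - 1) ∧ k % 2 = 1) ∧
      ¬(v = r + (2 * k - 3) ∧ k % 2 = 0) ∧ (v - r) % 4 = 1 ∧ fcatN r k v = v + 3) ∨
    (¬ v ≤ r ∧ ¬ v = r + 2 ∧ ¬(v = r + (2 * k - 1) ∧ k % 2 = 1) ∧
      ¬(v = r + (2 * k - 3) ∧ k % 2 = 0) ∧ ¬(v - r) % 4 = 1 ∧ (v - r) % 4 = 2 ∧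
      fcatN r k v = v - 3) ∨
    (¬ v ≤ r ∧ ¬ v = r + 2 ∧ ¬(v = r + (2 * k - 1) ∧ k % 2 = 1) ∧
      ¬(v = r + (2 * k - 3) ∧ k % 2 = 0) ∧ ¬(v - r) % 4 = 1 ∧ ¬(v - r) % 4 = 2 ∧
      (v - r) % 4 = 3 ∧ fcatN r k v = v - 1) ∨
    (¬ v ≤ r ∧ ¬ v = r + 2 ∧ ¬(v = r + (2 * k - 1) ∧ k % 2 = 1) ∧
      ¬(v = r + (2 * k - 3) ∧ k % 2 = 0) ∧ ¬(v - r) % 4 = 1 ∧ ¬(v - r) % 4 = 2 ∧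
      ¬(v - r) % 4 = 3 ∧ fcatN r k v = v + 1) := by
  obtain ⟨f, hf⟩ : ∃ f, fcatN r k v = f := ⟨_, rfl⟩
  rw [hf]
  unfold fcatN at hf
  split_ifs at hf with h1 h2 h3 h4 h5 h6 h7
  · exact Or.inl ⟨h1, hf.symm⟩
  · exact Or.inr (Or.inl ⟨h1, h2, hf.symm⟩)
  · exact Or.inr (Or.inr (Or.inl ⟨h1, h2, h3, hf.symm⟩))
  · exact Or.inr (Or.inr (Or.inr (Or.inl ⟨h1, h2, h3, h4, hf.symm⟩)))
  · exact Or.inr (Or.inr (Or.inr (Or.inr (Or.inl ⟨h1, h2, h3, h4, h5, hf.symm⟩))))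
  · exact Or.inr (Or.inr (Or.inr (Or.inr (Or.inr
      (Or.inl ⟨h1, h2, h3, h4, h5, h6, hf.symm⟩)))))
  · exact Or.inr (Or.inr (Or.inr (Or.inr (Or.inr (Or.inr
      (Or.inl ⟨h1, h2, h3, h4, h5, h6, h7, hf.symm⟩))))))
  · exact Or.inr (Or.inr (Or.inr (Or.inr (Or.inr (Or.inr
      (Or.inr ⟨h1, h2, h3, h4, h5, h6, h7, hf.symm⟩))))))

section catLemmas

variable {r k : ℕ}

lemma fcatN_lt (hk : 2 ≤ k) (v : ℕ) (hv : v < 2 * k + r) :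
    fcatN r k v < 2 * k + r := by
  have h1 := fcatN_spec r k v; omega

lemma fcatN_inj (hk : 2 ≤ k) (v w : ℕ) (hv : v < 2 * k + r) (hw : w < 2 * k + r)
    (h : fcatN r k v = fcatN r k w) : v = w := by
  have h1 := fcatN_spec r k v
  have h2 := fcatN_spec r k w
  omega

lemma uN_lt (hk : 2 ≤ k) (j : ℕ) (h1 : 1 ≤ j) (h2 : j ≤ k) : uN r k j < 2 * k + r := by
  unfold uN; split_ifs <;> first | exact absurd ‹False› not_false | omega

lemma lN_lt (hk : 2 ≤ k) (j : ℕ) (h1 : 1 ≤ j) (h2 : j ≤ k) : lN r k j < 2 * k + r := by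
  unfold lN; split_ifs <;> first | exact absurd ‹False› not_false | omega

lemma fcat_uN (hk : 2 ≤ k) (j : ℕ) (h1 : 1 ≤ j) (h2 : j ≤ k) :
    fcatN r k (uN r k j) = guN r k j := by
  have hs := fcatN_spec r k (uN r k j)
  unfold uN at hs ⊢
  unfold guN
  split_ifs at hs ⊢ <;> first | exact absurd ‹False› not_false | omega

lemma fcat_lN (hk : 2 ≤ k) (j : ℕ) (h1 : 1 ≤ j) (h2 : j ≤ k) :
    fcatN r k (lN r k j) = glN r k j := by
  have hs := fcatN_spec r k (lN r k j)
  unfold lN at hs ⊢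
  unfold glN
  split_ifs at hs ⊢ <;> first | exact absurd ‹False› not_false | omega

lemma adjN_spine (hk : 2 ≤ k) (j : ℕ) (h1 : 1 ≤ j) (h2 : j + 1 ≤ k) :
    AdjN r k (uN r k j) (uN r k (j + 1)) := by
  have e1 := fcat_uN (r := r) hk j h1 (by omega)
  have e2 := fcat_uN (r := r) hk (j + 1) (by omega) h2
  unfold AdjN
  rw [e1, e2]
  unfold uN guN
  split_ifs <;> first | exact absurd ‹False› not_false | omega

lemma adjN_leaf (hk : 2 ≤ k) (j : ℕ) (h1 : 1 ≤ j) (h2 : j ≤ k) :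
    AdjN r k (lN r k j) (uN r k j) := by
  have e1 := fcat_uN (r := r) hk j h1 h2
  have e2 := fcat_lN (r := r) hk j h1 h2
  unfold AdjN
  rw [e1, e2]
  unfold uN lN guN glN
  split_ifs <;> first | exact absurd ‹False› not_false | omega

lemma adjN_extra (hk : 2 ≤ k) (v : ℕ) (hv : v ≤ r) : AdjN r k v (uN r k 1) := by
  have hs := fcatN_spec r k v
  have e1 := fcat_uN (r := r) hk 1 le_rfl (by omega)
  unfold AdjN
  rw [e1]
  unfold uN guN
  split_ifs <;> first | exact absurd ‹False› not_false | omega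

lemma adjN_pendant (hk : 2 ≤ k) (j : ℕ) (h1 : 1 ≤ j) (h2 : j ≤ k) (x : ℕ)
    (hx : x < 2 * k + r) (h : AdjN r k x (lN r k j)) : x = uN r k j := by
  have hsx := fcatN_spec r k x
  have e1 := fcat_lN (r := r) hk j h1 h2
  unfold AdjN at h
  rw [e1] at h
  unfold lN glN at h
  unfold uN
  split_ifs at h ⊢ <;> first | exact absurd ‹False› not_false | omega

lemma uN_ne (hk : 2 ≤ k) (i j : ℕ) (hi1 : 1 ≤ i) (hi2 : i ≤ k) (hj1 : 1 ≤ j)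
    (hj2 : j ≤ k) (hij : i ≠ j) : uN r k i ≠ uN r k j := by
  unfold uN; split_ifs <;> first | exact absurd ‹False› not_false | omega

lemma lN_ne (i j : ℕ) (hi : 1 ≤ i) (hj : 1 ≤ j) (hij : i ≠ j) : lN r k i ≠ lN r k j := by
  unfold lN; split_ifs <;> first | exact absurd ‹False› not_false | omega

lemma lN_ne_uN (hk : 2 ≤ k) (i j : ℕ) (hi : 1 ≤ i) (hj1 : 1 ≤ j) (hj2 : j ≤ k) :
    lN r k i ≠ uN r k j := by
  unfold lN uN; split_ifs <;> first | exact absurd ‹False› not_false | omega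

lemma classifyN (hk : 2 ≤ k) (v : ℕ) (hv : v < 2 * k + r) :
    v ≤ r ∨ ∃ j, (1 ≤ j ∧ j ≤ k) ∧ (v = uN r k j ∨ v = lN r k j) := by
  by_cases h0 : v ≤ r
  · exact Or.inl h0
  right
  by_cases h2 : v - r = 2
  · exact ⟨1, ⟨le_refl 1, by omega⟩, Or.inl (by unfold uN; split_ifs <;> first | exact absurd ‹False› not_false | omega)⟩
  by_cases hko : v - r = 2 * k - 1 ∧ k % 2 = 1
  · exact ⟨k, ⟨by omega, le_refl k⟩, Or.inl (by unfold uN; split_ifs <;> first | exact absurd ‹False› not_false | omega)⟩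
  by_cases hke : v - r = 2 * k - 1 ∧ k % 2 = 0
  · exact ⟨k, ⟨by omega, le_refl k⟩, Or.inr (by unfold lN; split_ifs <;> first | exact absurd ‹False› not_false | omega)⟩
  by_cases hm1 : (v - r) % 4 = 1
  · exact ⟨(v - r + 3) / 2, ⟨by omega, by omega⟩,
      Or.inl (by unfold uN; split_ifs <;> first | exact absurd ‹False› not_false | omega)⟩
  by_cases hm2 : (v - r) % 4 = 2
  · exact ⟨(v - r) / 2, ⟨by omega, by omega⟩,
      Or.inl (by unfold uN; split_ifs <;> first | exact absurd ‹False› not_false | omega)⟩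
  by_cases hm3 : (v - r) % 4 = 3
  · exact ⟨(v - r + 1) / 2, ⟨by omega, by omega⟩,
      Or.inr (by unfold lN; split_ifs <;> first | exact absurd ‹False› not_false | omega)⟩
  · exact ⟨(v - r) / 2 + 1, ⟨by omega, by omega⟩,
      Or.inr (by unfold lN; split_ifs <;> first | exact absurd ‹False› not_false | omega)⟩

end catLemmas

/-- Generic criterion for computing the domination number. -/
lemma domNumber_eq_of {V : Type*} [Fintype V] (G : SimpleGraph V) (k : ℕ) (D : Finset V)
    (hcard : D.card = k) (hdom : Dominates G ↑D)
    (hlow : ∀ E : Finset V, Dominates G ↑E → k ≤ E.card) : domNumber G = k := by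
  unfold domNumber
  apply le_antisymm
  · exact Nat.sInf_le ⟨D, hcard, hdom⟩
  · refine le_csInf ⟨k, D, hcard, hdom⟩ ?_
    rintro m ⟨E, rfl, hE⟩
    exact hlow E hE

/-- Lower bound for domination via `k` vertices with pairwise disjoint closed
neighborhoods, each of the form `{L i, C i}`. -/
lemma lower_of_private {n k : ℕ} (G : SimpleGraph (Fin n)) (L C : Fin k → Fin n)
    (hpriv : ∀ i x, G.Adj (L i) x → x = C i)
    (hLL : ∀ i j, i ≠ j → L i ≠ L j)
    (hLC : ∀ i j, L i ≠ C j)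
    (hCC : ∀ i j, i ≠ j → C i ≠ C j)
    (E : Finset (Fin n)) (hE : Dominates G ↑E) : k ≤ E.card := by
  have hsel : ∀ i : Fin k, ∃ x, x ∈ E ∧ (x = L i ∨ x = C i) := by
    intro i
    rcases hE (L i) with h | ⟨d, hd, hadj⟩
    · exact ⟨L i, Finset.mem_coe.mp h, Or.inl rfl⟩
    · exact ⟨d, Finset.mem_coe.mp hd, Or.inr (hpriv i d hadj)⟩
  choose p hpE hpLC using hsel
  have hcard : (Finset.univ : Finset (Fin k)).card ≤ E.card := by
    apply Finset.card_le_card_of_injOn p (fun a _ => hpE a)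
    intro i _ j _ hij
    by_contra hne
    rcases hpLC i with hi | hi <;> rcases hpLC j with hj | hj
    · rw [hi, hj] at hij; exact hLL i j hne hij
    · rw [hi, hj] at hij; exact hLC i j hij
    · rw [hi, hj] at hij; exact hLC j i hij.symm
    · rw [hi, hj] at hij; exact hCC i j hne hij
  simpa using hcard

/-- The reversal permutation (for `k = 1`, giving a complete graph). -/
def grev (n : ℕ) : Fin n → Fin n :=
  fun v => ⟨n - 1 - v.val, by have h := v.isLt; omega⟩

noncomputable def erev (n : ℕ) : Fin n ≃ Fin n :=
  Equiv.ofBijective (grev n) (Finite.injective_iff_bijective.mp (by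
    intro a b hab
    have ha := a.isLt; have hb := b.isLt
    simp only [grev, Fin.mk.injEq] at hab
    exact Fin.ext (by omega)))

lemma adjrev (n : ℕ) (a b : Fin n) (h : a.val ≠ b.val) :
    (permGraph (erev n).symm).Adj a b := by
  have ha := a.isLt; have hb := b.isLt
  have hiff : (permGraph (erev n).symm).Adj a b ↔
      ((a.val < b.val ∧ n - 1 - b.val < n - 1 - a.val) ∨
        (b.val < a.val ∧ n - 1 - a.val < n - 1 - b.val)) := Iff.rfl
  rw [hiff]; omega

theorem exists_connected_permGraph_with_domination_number (n k : ℕ)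
    (hk1 : 1 ≤ k) (hk2 : k ≤ n / 2) :
    ∃ π : Equiv.Perm (Fin n), (permGraph π).Connected ∧ domNumber (permGraph π) = k := by
  rcases Nat.lt_or_ge k 2 with hk | hk
  · -- `k = 1`: complete graph via the reversal permutation
    have hk0 : k = 1 := by omega
    subst hk0
    have hn2 : 2 ≤ n := by omega
    refine ⟨(erev n).symm, ?_, ?_⟩
    · rw [SimpleGraph.connected_iff]
      constructor
      · intro a b
        by_cases hab : a = b
        · exact hab ▸ SimpleGraph.Reachable.refl a
        · exact (adjrev n a b (fun h => hab (Fin.ext h))).reachable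
      · exact ⟨⟨0, by omega⟩⟩
    · apply domNumber_eq_of _ _ ({⟨0, by omega⟩} : Finset (Fin n))
      · simp
      · intro v
        by_cases hv : v = ⟨0, by omega⟩
        · exact Or.inl (by simp [hv])
        · refine Or.inr ⟨⟨0, by omega⟩, by simp, adjrev n v _ ?_⟩
          exact fun h => hv (Fin.ext h)
      · intro E hE
        rcases hE ⟨0, by omega⟩ with h | ⟨d, hd, _⟩
        · exact Finset.card_pos.mpr ⟨_, Finset.mem_coe.mp h⟩
        · exact Finset.card_pos.mpr ⟨d, Finset.mem_coe.mp hd⟩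
  · -- `k ≥ 2`: caterpillar construction
    obtain ⟨r, rfl⟩ : ∃ r, n = 2 * k + r := ⟨n - 2 * k, by omega⟩
    have hn0 : 0 < 2 * k + r := by omega
    -- vertex constructor
    set Vtx : ℕ → Fin (2 * k + r) := fun v => ⟨v % (2 * k + r), Nat.mod_lt _ hn0⟩ with hVtxdef
    have hVtx : ∀ v, v < 2 * k + r → (Vtx v).val = v := fun v hv => Nat.mod_eq_of_lt hv
    -- the permutation
    have hginj : Function.Injective
        (fun v : Fin (2 * k + r) => (⟨fcatN r k v.val, fcatN_lt hk v.val v.isLt⟩ :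
          Fin (2 * k + r))) := by
      intro a b hab
      simp only [Fin.mk.injEq] at hab
      exact Fin.ext (fcatN_inj hk _ _ a.isLt b.isLt hab)
    set e : Fin (2 * k + r) ≃ Fin (2 * k + r) :=
      Equiv.ofBijective _ (Finite.injective_iff_bijective.mp hginj) with hedef
    have hadj : ∀ a b : Fin (2 * k + r),
        (permGraph e.symm).Adj a b ↔ AdjN r k a.val b.val := fun a b => Iff.rfl
    refine ⟨e.symm, ?_, ?_⟩
    · -- connectivity
      have hreach_spine : ∀ j, 1 ≤ j → j ≤ k →
          (permGraph e.symm).Reachable (Vtx (uN r k j)) (Vtx (uN r k 1)) := by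
        intro j
        induction j with
        | zero => intro h; omega
        | succ j ih =>
          intro h1 h2
          by_cases hj : j = 0
          · subst hj; exact SimpleGraph.Reachable.refl _
          · have hstep : (permGraph e.symm).Adj (Vtx (uN r k (j + 1))) (Vtx (uN r k j)) := by
              rw [hadj, hVtx _ (uN_lt hk _ (by omega) h2), hVtx _ (uN_lt hk _ (by omega) (by omega))]
              rcases adjN_spine hk j (by omega) h2 with ⟨h, h'⟩ | ⟨h, h'⟩
              · exact Or.inr ⟨h, h'⟩
              · exact Or.inl ⟨h, h'⟩
            exact hstep.reachable.trans (ih (by omega) (by omega))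
      have hreach : ∀ v : Fin (2 * k + r),
          (permGraph e.symm).Reachable v (Vtx (uN r k 1)) := by
        intro v
        rcases classifyN hk v.val v.isLt with hv | ⟨j, ⟨hj1, hj2⟩, hv | hv⟩
        · -- extra leaf of the first spine vertex
          have hstep : (permGraph e.symm).Adj v (Vtx (uN r k 1)) := by
            rw [hadj, hVtx _ (uN_lt hk _ le_rfl (by omega))]
            exact adjN_extra hk v.val hv
          exact hstep.reachable
        · have hv' : v = Vtx (uN r k j) := Fin.ext (by rw [hVtx _ (uN_lt hk _ hj1 hj2)]; exact hv)
          rw [hv']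
          exact hreach_spine j hj1 hj2
        · have hstep : (permGraph e.symm).Adj v (Vtx (uN r k j)) := by
            rw [hadj, hVtx _ (uN_lt hk _ hj1 hj2)]
            rw [hv]
            exact adjN_leaf hk j hj1 hj2
          exact hstep.reachable.trans (hreach_spine j hj1 hj2)
      rw [SimpleGraph.connected_iff]
      exact ⟨fun a b => (hreach a).trans (hreach b).symm, ⟨Vtx 0⟩⟩
    · -- domination number
      apply domNumber_eq_of _ _
        (Finset.image (fun j : Fin k => Vtx (uN r k (j.val + 1))) Finset.univ)
      · -- cardinality
        rw [Finset.card_image_of_injective _ ?_, Finset.card_univ, Fintype.card_fin]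
        intro i j hij
        have hij' : Vtx (uN r k (i.val + 1)) = Vtx (uN r k (j.val + 1)) := hij
        have : (Vtx (uN r k (i.val + 1))).val = (Vtx (uN r k (j.val + 1))).val := by rw [hij']
        rw [hVtx _ (uN_lt hk _ (by omega) (by omega)),
          hVtx _ (uN_lt hk _ (by omega) (by omega))] at this
        by_contra hne
        exact uN_ne hk (i.val + 1) (j.val + 1) (by omega) (by omega) (by omega) (by omega)
          (fun h => hne (Fin.ext (by omega))) this
      · -- dominating
        intro v
        rcases classifyN hk v.val v.isLt with hv | ⟨j, ⟨hj1, hj2⟩, hv | hv⟩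
        · refine Or.inr ⟨Vtx (uN r k 1), ?_, ?_⟩
          · simp only [Finset.coe_image, Set.mem_image, Finset.mem_coe]
            exact ⟨⟨0, by omega⟩, by simp, rfl⟩
          · rw [hadj, hVtx _ (uN_lt hk _ le_rfl (by omega))]
            exact adjN_extra hk v.val hv
        · refine Or.inl ?_
          simp only [Finset.coe_image, Set.mem_image, Finset.mem_coe]
          refine ⟨⟨j - 1, by omega⟩, by simp, ?_⟩
          apply Fin.ext
          rw [hVtx _ (uN_lt hk _ (by omega) (by omega))]
          have : j - 1 + 1 = j := by omega
          rw [this, hv]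
        · refine Or.inr ⟨Vtx (uN r k j), ?_, ?_⟩
          · simp only [Finset.coe_image, Set.mem_image, Finset.mem_coe]
            refine ⟨⟨j - 1, by omega⟩, by simp, ?_⟩
            have : j - 1 + 1 = j := by omega
            rw [this]
          · rw [hadj, hVtx _ (uN_lt hk _ hj1 hj2), hv]
            exact adjN_leaf hk j hj1 hj2
      · -- lower bound
        intro E hE
        apply lower_of_private (permGraph e.symm)
          (fun i : Fin k => Vtx (lN r k (i.val + 1)))
          (fun i : Fin k => Vtx (uN r k (i.val + 1))) ?_ ?_ ?_ ?_ E hE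
        · intro i x hx
          have hx2 : (permGraph e.symm).Adj (Vtx (lN r k (i.val + 1))) x := hx
          have hx' := hx2.symm
          rw [hadj, hVtx _ (lN_lt hk _ (by omega) (by omega))] at hx'
          have := adjN_pendant hk (i.val + 1) (by omega) (by omega) x.val x.isLt hx'
          apply Fin.ext
          rw [hVtx _ (uN_lt hk _ (by omega) (by omega))]
          exact this
        · intro i j hij
          intro h
          have h' : Vtx (lN r k (i.val + 1)) = Vtx (lN r k (j.val + 1)) := h
          have : (Vtx (lN r k (i.val + 1))).val = (Vtx (lN r k (j.val + 1))).val := by rw [h']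
          rw [hVtx _ (lN_lt hk _ (by omega) (by omega)),
            hVtx _ (lN_lt hk _ (by omega) (by omega))] at this
          exact lN_ne (i.val + 1) (j.val + 1) (by omega) (by omega)
            (fun h' => hij (Fin.ext (by omega))) this
        · intro i j h
          have h' : Vtx (lN r k (i.val + 1)) = Vtx (uN r k (j.val + 1)) := h
          have : (Vtx (lN r k (i.val + 1))).val = (Vtx (uN r k (j.val + 1))).val := by rw [h']
          rw [hVtx _ (lN_lt hk _ (by omega) (by omega)),
            hVtx _ (uN_lt hk _ (by omega) (by omega))] at this
          exact lN_ne_uN hk (i.val + 1) (j.val + 1) (by omega) (by omega) (by omega) this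
        · intro i j hij h
          have h' : Vtx (uN r k (i.val + 1)) = Vtx (uN r k (j.val + 1)) := h
          have : (Vtx (uN r k (i.val + 1))).val = (Vtx (uN r k (j.val + 1))).val := by rw [h']
          rw [hVtx _ (uN_lt hk _ (by omega) (by omega)),
            hVtx _ (uN_lt hk _ (by omega) (by omega))] at this
          exact uN_ne hk (i.val + 1) (j.val + 1) (by omega) (by omega) (by omega) (by omega)
            (fun h' => hij (Fin.ext (by omega))) this
end
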